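/- Let E be a finite-dimensional complex normed vector space and let f : ℂ × ℂ → E be a function that is holomorphic (complex differentiable) on the complement of the single point (0,0). Then f extends to a holomorphic function on all of ℂ × ℂ; that is, there exists a holomorphic function g : ℂ × ℂ → E with g(w) = f(w) for all w ≠ (0,0). -/

import Mathlib

/-!
Take the Cauchy integral of `f` in the first variable over the unit circle,
`h (z, w) = (2πi)⁻¹ ∮_{|ζ| = 1} f (ζ, w) / (ζ - z) dζ`.
The cylinder `{|ζ| = 1} × ℂ` avoids the origin, so there the integrand is continuous and
holomorphic in `w`; differentiating under the integral sign, with Cauchy estimates in `w` as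
domination, shows that `h` is holomorphic on `{|z| < 1} × ℂ`. For `w ≠ 0` the one-variable
Cauchy formula gives `h = f`, and by continuity this persists on `{|z| < 1} × ℂ` minus the origin,
so `h` supplies the missing value at the origin.
-/

open Complex Metric Set Filter MeasureTheory ContinuousLinearMap
open scoped Real Topology

section CauchyIntegralWithParameter

variable {E : Type*} [NormedAddCommGroup E] [NormedSpace ℂ E]

theorem hasFDerivAt_circleIntegral_of_dominated {H : Type*} [NormedAddCommGroup H]
    [NormedSpace ℂ H] {G : H → ℂ → E} {G' : H → ℂ → H →L[ℂ] E} {c : ℂ} {R C : ℝ} {x₀ : H}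
    {s : Set H} (hs : s ∈ 𝓝 x₀) (hG : ∀ x ∈ s, CircleIntegrable (G x) c R)
    (hG'_meas : AEStronglyMeasurable (G' x₀ ∘ circleMap c R))
    (hG'_le : ∀ x ∈ s, ∀ ζ ∈ sphere c |R|, ‖G' x ζ‖ ≤ C)
    (hG_diff : ∀ x ∈ s, ∀ ζ ∈ sphere c |R|, HasFDerivAt (G · ζ) (G' x ζ) x) :
    HasFDerivAt (fun x => ∮ ζ in C(c, R), G x ζ) (∮ ζ in C(c, R), G' x₀ ζ) x₀ := by
  refine intervalIntegral.hasFDerivAt_integral_of_dominated_of_fderiv_le (𝕜 := ℂ)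
    (F := fun x θ => deriv (circleMap c R) θ • G x (circleMap c R θ))
    (F' := fun x θ => deriv (circleMap c R) θ • G' x (circleMap c R θ))
    (bound := fun _ => |R| * C) hs ?_ (hG x₀ (mem_of_mem_nhds hs)).out ?_ ?_
    intervalIntegrable_const ?_
  · filter_upwards [hs] with x hx using (hG x hx).out.def'.aestronglyMeasurable
  · simp only [deriv_circleMap]
    exact (((continuous_circleMap 0 R).mul continuous_const).aestronglyMeasurable.smul
      hG'_meas).restrict
  · refine ae_of_all _ fun θ _ x hx => ?_
    rw [deriv_circleMap, norm_smul, norm_mul, norm_circleMap_zero, norm_I, mul_one]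
    exact mul_le_mul_of_nonneg_left (hG'_le x hx _ (circleMap_mem_sphere' c R θ)) (abs_nonneg R)
  · exact ae_of_all _ fun θ _ x hx => (hG_diff x hx _ (circleMap_mem_sphere' c R θ)).const_smul _

noncomputable def subFstInvSMulFDeriv (ζ : ℂ) (p : ℂ × ℂ) (d v : E) : ℂ × ℂ →L[ℂ] E :=
  (ζ - p.1)⁻¹ • (snd ℂ ℂ ℂ).smulRight d + ((ζ - p.1) ^ 2)⁻¹ • (fst ℂ ℂ ℂ).smulRight v

theorem hasFDerivAt_sub_fst_inv_smul {φ : ℂ → E} {d : E} {ζ : ℂ} {p : ℂ × ℂ} (hζ : ζ ≠ p.1)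
    (hφ : HasDerivAt φ d p.2) :
    HasFDerivAt (fun q : ℂ × ℂ => (ζ - q.1)⁻¹ • φ q.2) (subFstInvSMulFDeriv ζ p d (φ p.2)) p := by
  have hinv : HasDerivAt (fun z => (ζ - z)⁻¹) ((ζ - p.1) ^ 2)⁻¹ p.1 := by
    simpa using ((hasDerivAt_id p.1).const_sub ζ).fun_inv (sub_ne_zero.2 hζ)
  refine ((hinv.comp_hasFDerivAt p hasFDerivAt_fst).smul
    (hφ.hasFDerivAt.comp p hasFDerivAt_snd)).congr_fderiv ?_
  ext <;> simp [subFstInvSMulFDeriv]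

theorem norm_subFstInvSMulFDeriv_le (ζ : ℂ) (p : ℂ × ℂ) (d v : E) :
    ‖subFstInvSMulFDeriv ζ p d v‖ ≤ ‖ζ - p.1‖⁻¹ * ‖d‖ + (‖ζ - p.1‖ ^ 2)⁻¹ * ‖v‖ := by
  refine (norm_add_le _ _).trans ?_
  rw [norm_smul, norm_smul, norm_smulRight_apply, norm_smulRight_apply, norm_inv, norm_inv,
    norm_pow]
  gcongr
  · exact mul_le_of_le_one_left (norm_nonneg _) (norm_snd_le ..)
  · exact mul_le_of_le_one_left (norm_nonneg _) (norm_fst_le ..)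

theorem aestronglyMeasurable_subFstInvSMulFDeriv {α : Type*} [MeasurableSpace α] {μ : Measure α}
    {ζ : α → ℂ} {d v : α → E} (p : ℂ × ℂ) (hζ : Measurable ζ) (hd : AEStronglyMeasurable d μ)
    (hv : AEStronglyMeasurable v μ) :
    AEStronglyMeasurable (fun θ => subFstInvSMulFDeriv (ζ θ) p (d θ) (v θ)) μ := by
  have hinv : AEStronglyMeasurable (fun θ => (ζ θ - p.1)⁻¹) μ :=
    (hζ.sub_const _).inv.aestronglyMeasurable
  simp only [subFstInvSMulFDeriv, ← inv_pow]
  have hsnd := (smulRightL ℂ (ℂ × ℂ) E (snd ℂ ℂ ℂ)).continuous.comp_aestronglyMeasurable hd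
  have hfst := (smulRightL ℂ (ℂ × ℂ) E (fst ℂ ℂ ℂ)).continuous.comp_aestronglyMeasurable hv
  exact (hinv.smul hsnd).add ((hinv.pow 2).smul hfst)

theorem exists_bound_norm_and_norm_deriv_of_continuousOn {F : ℂ × ℂ → E} {K : Set ℂ}
    (hK : IsCompact K) (hc : ContinuousOn F (K ×ˢ univ))
    (hd : ∀ ζ ∈ K, Differentiable ℂ fun w => F (ζ, w)) (w₀ : ℂ) {ρ : ℝ} (hρ : 0 < ρ) :
    ∃ M, ∀ ζ ∈ K, ∀ w ∈ closedBall w₀ ρ,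
      ‖F (ζ, w)‖ ≤ M ∧ ‖deriv (fun w => F (ζ, w)) w‖ ≤ M / ρ := by
  obtain ⟨M, hM⟩ := (hK.prod (isCompact_closedBall w₀ (2 * ρ))).exists_bound_of_continuousOn
    (hc.mono (prod_mono le_rfl (subset_univ _)))
  refine ⟨M, fun ζ hζ w hw => ⟨hM _ ⟨hζ, closedBall_subset_closedBall (by linarith) hw⟩, ?_⟩⟩
  refine norm_deriv_le_of_forall_mem_sphere_norm_le hρ (hd ζ hζ).diffContOnCl fun z hz => ?_
  refine hM _ ⟨hζ, ?_⟩
  rw [mem_closedBall] at hw ⊢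
  rw [mem_sphere] at hz
  linarith [dist_triangle z w w₀]

theorem le_norm_sub_of_mem_sphere_of_mem_ball {c z₀ z ζ : ℂ} {R ρ : ℝ} (hζ : ζ ∈ sphere c R)
    (hz : z ∈ ball z₀ ρ) (hρ : 2 * ρ ≤ R - dist z₀ c) : ρ ≤ ‖ζ - z‖ := by
  rw [mem_sphere] at hζ
  rw [mem_ball] at hz
  rw [← dist_eq_norm]
  linarith [dist_triangle ζ z c, dist_triangle z z₀ c, dist_comm ζ z]

noncomputable def cauchyIntegralFst (F : ℂ × ℂ → E) (c : ℂ) (R : ℝ) (p : ℂ × ℂ) : E :=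
  (2 * π * I : ℂ)⁻¹ • ∮ ζ in C(c, R), (ζ - p.1)⁻¹ • F (ζ, p.2)

theorem cauchyIntegralFst_eq [CompleteSpace E] {F : ℂ × ℂ → E} {c : ℂ} {R : ℝ} {p : ℂ × ℂ}
    (hp : p.1 ∈ ball c R) (hF : DiffContOnCl ℂ (fun ζ => F (ζ, p.2)) (ball c R)) :
    cauchyIntegralFst F c R p = F p :=
  hF.two_pi_i_inv_smul_circleIntegral_sub_inv_smul hp

theorem differentiableOn_cauchyIntegralFst [CompleteSpace E] {F : ℂ × ℂ → E} {c : ℂ} {R : ℝ}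
    (hc : ContinuousOn F (sphere c R ×ˢ univ))
    (hd : ∀ ζ ∈ sphere c R, Differentiable ℂ fun w => F (ζ, w)) :
    DifferentiableOn ℂ (cauchyIntegralFst F c R) (ball c R ×ˢ univ) := by
  rintro p₀ ⟨hp₀, -⟩
  have hR : 0 < R := pos_of_mem_ball hp₀
  obtain ⟨ρ, hρ, hρR⟩ : ∃ ρ > 0, 2 * ρ ≤ R - dist p₀.1 c :=
    ⟨(R - dist p₀.1 c) / 2, half_pos (sub_pos.2 hp₀), by linarith⟩
  set s := ball p₀.1 ρ ×ˢ ball p₀.2 ρ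
  have hs : s ∈ 𝓝 p₀ := prod_mem_nhds (ball_mem_nhds _ hρ) (ball_mem_nhds _ hρ)
  have hsep : ∀ p ∈ s, ∀ ζ ∈ sphere c R, ρ ≤ ‖ζ - p.1‖ := fun p hp ζ hζ =>
    le_norm_sub_of_mem_sphere_of_mem_ball hζ hp.1 hρR
  have hne : ∀ p ∈ s, ∀ ζ ∈ sphere c R, ζ - p.1 ≠ 0 := fun p hp ζ hζ =>
    norm_pos_iff.1 (hρ.trans_le (hsep p hp ζ hζ))
  have hslice : Continuous (Function.uncurry fun θ w => F (circleMap c R θ, w)) :=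
    hc.comp_continuous ((continuous_circleMap c R).comp continuous_fst |>.prodMk continuous_snd)
      fun x => ⟨circleMap_mem_sphere c hR.le x.1, mem_univ _⟩
  obtain ⟨M, hM⟩ :=
    exists_bound_norm_and_norm_deriv_of_continuousOn (isCompact_sphere c R) hc hd p₀.2 hρ
  have key := hasFDerivAt_circleIntegral_of_dominated (c := c) (R := R)
    (G := fun p ζ => (ζ - p.1)⁻¹ • F (ζ, p.2))
    (G' := fun p ζ => subFstInvSMulFDeriv ζ p (deriv (fun w => F (ζ, w)) p.2) (F (ζ, p.2)))
    (C := ρ⁻¹ * (M / ρ) + (ρ ^ 2)⁻¹ * M) hs ?_ ?_ ?_ ?_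
  · exact (key.const_smul _).differentiableAt.differentiableWithinAt
  · refine fun p hp => ContinuousOn.circleIntegrable hR.le (ContinuousOn.smul ?_ ?_)
    · exact (continuousOn_id.sub continuousOn_const).inv₀ (hne p hp)
    · exact hc.comp (continuousOn_id.prodMk continuousOn_const) fun ζ hζ => ⟨hζ, mem_univ _⟩
  · refine aestronglyMeasurable_subFstInvSMulFDeriv p₀ (measurable_circleMap c R) ?_
      (hslice.comp (continuous_id.prodMk continuous_const)).aestronglyMeasurable
    exact ((stronglyMeasurable_deriv_with_param hslice).comp_measurable
      (g := fun θ : ℝ => (θ, p₀.2)) (by fun_prop)).aestronglyMeasurable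
  · rintro p hp ζ hζ
    rw [abs_of_pos hR] at hζ
    have hw : p.2 ∈ closedBall p₀.2 ρ := ball_subset_closedBall hp.2
    refine (norm_subFstInvSMulFDeriv_le _ _ _ _).trans ?_
    gcongr
    exacts [hsep p hp ζ hζ, (hM ζ hζ _ hw).2, hsep p hp ζ hζ, (hM ζ hζ _ hw).1]
  · rintro p hp ζ hζ
    rw [abs_of_pos hR] at hζ
    exact hasFDerivAt_sub_fst_inv_smul (sub_ne_zero.1 (hne p hp ζ hζ)) (hd ζ hζ _).hasDerivAt

end CauchyIntegralWithParameter

theorem differentiable_update_of_eqOn {𝕜 V W : Type*} [NontriviallyNormedField 𝕜]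
    [NormedAddCommGroup V] [NormedSpace 𝕜 V] [NormedAddCommGroup W] [NormedSpace 𝕜 W]
    [DecidableEq V] {f g : V → W} {a : V} {U : Set V} (hf : DifferentiableOn 𝕜 f {a}ᶜ)
    (hU : U ∈ 𝓝 a) (hg : DifferentiableOn 𝕜 g U) (hfg : EqOn g f (U \ {a})) :
    Differentiable 𝕜 (Function.update f a (g a)) := by
  intro x
  by_cases hx : x = a
  · subst hx
    refine (hg.differentiableAt hU).congr_of_eventuallyEq ?_
    filter_upwards [hU] with y hy
    by_cases hy' : y = x
    · rw [hy', Function.update_self]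
    · rw [Function.update_of_ne hy', hfg ⟨hy, hy'⟩]
  · have hx' : {a}ᶜ ∈ 𝓝 x := isOpen_compl_singleton.mem_nhds hx
    refine (hf.differentiableAt hx').congr_of_eventuallyEq ?_
    filter_upwards [hx'] with y hy using Function.update_of_ne hy _ _

/-- Hartogs' extension phenomenon in two complex variables: a function holomorphic on
`ℂ × ℂ` minus the single point `(0, 0)`, with values in a finite-dimensional complex
normed vector space, extends to a holomorphic function on all of `ℂ × ℂ`. -/
theorem hartogs_extension_of_isolated_singularity
    {E : Type*} [NormedAddCommGroup E] [NormedSpace ℂ E] [FiniteDimensional ℂ E]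
    (f : ℂ × ℂ → E) (hf : DifferentiableOn ℂ f ({((0 : ℂ), (0 : ℂ))}ᶜ : Set (ℂ × ℂ))) :
    ∃ g : ℂ × ℂ → E, Differentiable ℂ g ∧ ∀ w : ℂ × ℂ, w ≠ (0, 0) → g w = f w := by
  have hfd : ∀ p ≠ ((0 : ℂ), (0 : ℂ)), DifferentiableAt ℂ f p := fun p hp =>
    hf.differentiableAt (isOpen_compl_singleton.mem_nhds hp)
  have hslice₁ : ∀ w ≠ 0, Differentiable ℂ fun z => f (z, w) := fun w hw z =>
    (hfd _ (by simp [hw])).comp z (differentiableAt_id.prodMk (differentiableAt_const w))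
  have hslice₂ : ∀ ζ ≠ 0, Differentiable ℂ fun w => f (ζ, w) := fun ζ hζ w =>
    (hfd _ (by simp [hζ])).comp w ((differentiableAt_const ζ).prodMk differentiableAt_id)
  set U : Set (ℂ × ℂ) := ball 0 1 ×ˢ univ
  have hU : IsOpen U := isOpen_ball.prod isOpen_univ
  have hcont : ContinuousOn f (sphere 0 1 ×ˢ univ) :=
    hf.continuousOn.mono fun p hp h => by obtain rfl := h; simp at hp
  have hdiff : DifferentiableOn ℂ (cauchyIntegralFst f 0 1) U :=
    differentiableOn_cauchyIntegralFst hcont fun ζ hζ => hslice₂ ζ (by rintro rfl; simp at hζ)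
  have heq_off_axis : EqOn (cauchyIntegralFst f 0 1) f (U ∩ univ ×ˢ {0}ᶜ) := fun p hp =>
    cauchyIntegralFst_eq hp.1.1 (hslice₁ p.2 hp.2.2).diffContOnCl
  have heq : EqOn (cauchyIntegralFst f 0 1) f (U \ {(0, 0)}) :=
    heq_off_axis.of_subset_closure (hdiff.continuousOn.mono sdiff_subset)
      (hf.continuousOn.mono (sdiff_subset_compl _ _))
      (fun p hp => ⟨hp.1, by rintro rfl; exact hp.2.2 rfl⟩)
      (sdiff_subset.trans <|
        (dense_univ.prod (dense_compl_singleton 0)).open_subset_closure_inter hU)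
  refine ⟨_, differentiable_update_of_eqOn hf (hU.mem_nhds ?_) hdiff heq,
    fun w hw => Function.update_of_ne hw _ _⟩
  exact ⟨mem_ball_self one_pos, mem_univ _⟩
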